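/- Let n ≥ 1 be a natural number, l a natural number with gcd(l, n) = 1, j a natural number with j ≤ n − 1, and m ∈ ℂ such that sin(πlp/n + m) ≠ 0 for every natural number p < n and sin(mn) ≠ 0. Then ∑_{p=0}^{n−1} cos((2j+1)(πlp/n + m)) / sin(πlp/n + m) = n · cos(mn)/sin(mn); equivalently, ∑_{p=0}^{n−1} csc(πlp/n + m) · (−cos((2j+1)(πlp/n + m))) = −n · cot(mn). -/

import Mathlib

/-!
Telescoping `cos (x + θ) - cos (x - θ) = -2 sin x sin θ` gives
`cos ((2j+1)θ) / sin θ = cot θ - 2 ∑_{k=1}^{j} sin (2kθ)`. Along the nodes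
`θ_p = m + pπl/n` we have `exp (2iθ_p) = w ζ^p` with `w = exp (2im)` and `ζ = exp (2πil/n)` a
primitive `n`-th root of unity (as `gcd(l, n) = 1`), so for `0 < k < n` the sums
`∑_p exp (±2ikθ_p)`, hence `∑_p sin (2kθ_p)`, vanish. What is left is
`∑_p cot θ_p = n cot (nm)`: writing `cot θ = i (1 + 2 / (u - 1))` with `u = exp (2iθ)`,
this follows from the partial fraction identity `∑_p 1 / (w ζ^p - 1) = n / (w^n - 1)`,
obtained by expanding `1 / (u - 1) = (∑_{k<n} u^k) / (u^n - 1)`, using `(w ζ^p)^n = w^n`,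
and swapping the sums.
-/

open Complex Real

theorem mul_pow_pow_of_pow_eq_one {M : Type*} [CommMonoid M] {ζ : M} {n : ℕ} (h : ζ ^ n = 1)
    (w : M) (p : ℕ) : (w * ζ ^ p) ^ n = w ^ n := by
  rw [mul_pow, ← pow_mul, mul_comm p, pow_mul, h, one_pow, mul_one]

namespace IsPrimitiveRoot

variable {K : Type*} [Field K] {ζ : K} {n : ℕ}

theorem sum_mul_pow_zpow_eq_zero (hζ : IsPrimitiveRoot ζ n) (w : K) {k : ℤ}
    (hk : ¬ (n : ℤ) ∣ k) : ∑ p ∈ Finset.range n, (w * ζ ^ p) ^ k = 0 := by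
  have hne : ζ ^ k ≠ 1 := fun h => hk ((hζ.zpow_eq_one_iff_dvd k).1 h)
  have hpow : (ζ ^ k) ^ n = 1 := by
    rw [← zpow_natCast, ← zpow_mul, mul_comm, zpow_mul, hζ.zpow_eq_one, one_zpow]
  have hswap (p : ℕ) : (w * ζ ^ p) ^ k = w ^ k * (ζ ^ k) ^ p := by
    rw [mul_zpow, ← zpow_natCast, ← zpow_natCast, ← zpow_mul, ← zpow_mul,
      mul_comm (p : ℤ)]
  simp_rw [hswap, ← Finset.mul_sum, geom_sum_eq hne, hpow, sub_self, zero_div, mul_zero]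

theorem sum_inv_mul_pow_sub_one (hζ : IsPrimitiveRoot ζ n) {w : K} (hw : w ^ n ≠ 1) :
    ∑ p ∈ Finset.range n, (w * ζ ^ p - 1)⁻¹ = n * (w ^ n - 1)⁻¹ := by
  have hn : n ≠ 0 := by rintro rfl; exact hw (pow_zero w)
  have hterm (p : ℕ) :
      (w * ζ ^ p - 1)⁻¹ = (w ^ n - 1)⁻¹ * ∑ k ∈ Finset.range n, (w * ζ ^ p) ^ k := by
    have hne : w * ζ ^ p ≠ 1 := fun h =>
      hw (by rw [← mul_pow_pow_of_pow_eq_one hζ.pow_eq_one w p, h, one_pow])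
    rw [geom_sum_eq hne, mul_pow_pow_of_pow_eq_one hζ.pow_eq_one, div_eq_mul_inv, ← mul_assoc,
      inv_mul_cancel₀ (sub_ne_zero.2 hw), one_mul]
  have hcolumn (k : ℕ) (hk : k ∈ Finset.range n) :
      ∑ p ∈ Finset.range n, (w * ζ ^ p) ^ k = if k = 0 then (n : K) else 0 := by
    split_ifs with h0
    · simp [h0]
    · have hndvd : ¬ (n : ℤ) ∣ k := by
        exact_mod_cast Nat.not_dvd_of_pos_of_lt (Nat.pos_of_ne_zero h0) (Finset.mem_range.1 hk)
      exact_mod_cast hζ.sum_mul_pow_zpow_eq_zero w hndvd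
  rw [Finset.sum_congr rfl fun p _ => hterm p, ← Finset.mul_sum, Finset.sum_comm,
    Finset.sum_congr rfl hcolumn, Finset.sum_ite_eq',
    if_pos (Finset.mem_range.2 (Nat.pos_of_ne_zero hn)), mul_comm]

end IsPrimitiveRoot

namespace Complex

theorem exp_two_mul_I_mul_ne_one_of_sin_ne_zero {z : ℂ} (hz : sin z ≠ 0) :
    exp (2 * I * z) ≠ 1 := by
  rw [Ne, exp_eq_one_iff]
  rintro ⟨k, hk⟩
  refine hz (sin_eq_zero_iff.2 ⟨k, mul_left_cancel₀ (by simp : (2 * I : ℂ) ≠ 0) ?_⟩)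
  linear_combination hk

theorem cot_eq_I_mul_one_add_two_mul_inv {z : ℂ} (hz : exp (2 * I * z) ≠ 1) :
    cot z = I * (1 + 2 * (exp (2 * I * z) - 1)⁻¹) := by
  have h : exp (2 * I * z) - 1 ≠ 0 := sub_ne_zero.2 hz
  have h' : 1 - exp (2 * I * z) ≠ 0 := sub_ne_zero.2 hz.symm
  rw [cot_eq_exp_ratio]
  field_simp
  linear_combination (exp (2 * I * z) ^ 2 - 1) * I_sq

theorem cos_two_mul_add_one_mul (j : ℕ) (θ : ℂ) :
    cos ((2 * j + 1) * θ) =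
      cos θ - 2 * sin θ * ∑ k ∈ Finset.range j, sin (2 * ↑(k + 1) * θ) := by
  induction j with
  | zero => simp
  | succ j ih =>
    have hcos (x : ℂ) : cos (x + θ) = cos (x - θ) - 2 * sin θ * sin x := by
      rw [cos_add, cos_sub]; ring
    rw [Finset.sum_range_succ, mul_add, ← sub_sub, ← ih]
    convert hcos (2 * ↑(j + 1) * θ) using 3 <;> push_cast <;> ring

theorem exp_two_mul_I_mul_add_nat_mul (m a : ℂ) (p : ℕ) :
    exp (2 * I * (m + p * a)) = exp (2 * I * m) * exp (2 * I * a) ^ p := by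
  rw [← exp_nat_mul, ← exp_add]; ring_nf

section ArithmeticProgression

variable {n : ℕ} {a : ℂ} (ha : IsPrimitiveRoot (exp (2 * I * a)) n) (m : ℂ)
include ha

theorem sum_sin_two_mul_nat_mul_add_nat_mul {k : ℕ} (hk : ¬ n ∣ k) :
    ∑ p ∈ Finset.range n, sin (2 * k * (m + p * a)) = 0 := by
  have hexp (i : ℤ) (hi : ¬ (n : ℤ) ∣ i) :
      ∑ p ∈ Finset.range n, exp (i * (2 * I * (m + p * a))) = 0 := by
    simp_rw [exp_int_mul, exp_two_mul_I_mul_add_nat_mul]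
    exact ha.sum_mul_pow_zpow_eq_zero _ hi
  have hk' : ¬ (n : ℤ) ∣ k := by exact_mod_cast hk
  have hsin (p : ℕ) : sin (2 * k * (m + p * a)) =
      (exp (((-k : ℤ) : ℂ) * (2 * I * (m + p * a))) -
        exp (((k : ℤ) : ℂ) * (2 * I * (m + p * a)))) * I / 2 := by
    rw [sin]; push_cast; ring_nf
  simp_rw [hsin, ← Finset.sum_div, ← Finset.sum_mul, Finset.sum_sub_distrib,
    hexp _ hk', hexp _ (by rwa [Int.dvd_neg]), sub_zero, zero_mul, zero_div]

theorem sum_cot_add_nat_mul (hm : sin (n * m) ≠ 0) :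
    ∑ p ∈ Finset.range n, cot (m + p * a) = n * cot (n * m) := by
  have hw : exp (2 * I * (n * m)) = exp (2 * I * m) ^ n := by
    rw [← exp_nat_mul]; ring_nf
  have hwn : exp (2 * I * m) ^ n ≠ 1 := hw ▸ exp_two_mul_I_mul_ne_one_of_sin_ne_zero hm
  have hu (p : ℕ) : exp (2 * I * (m + p * a)) ≠ 1 := by
    rw [exp_two_mul_I_mul_add_nat_mul]
    exact fun h => hwn (by rw [← mul_pow_pow_of_pow_eq_one ha.pow_eq_one _ p, h, one_pow])
  simp_rw [cot_eq_I_mul_one_add_two_mul_inv (hu _), exp_two_mul_I_mul_add_nat_mul,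
    cot_eq_I_mul_one_add_two_mul_inv (hw ▸ hwn), hw, ← Finset.mul_sum, Finset.sum_add_distrib,
    ← Finset.mul_sum, ha.sum_inv_mul_pow_sub_one hwn, Finset.sum_const, Finset.card_range,
    nsmul_eq_mul]
  ring

end ArithmeticProgression

end Complex

theorem watson_harkins_degenerate_case_general
    (n : ℕ) (l : ℕ) (hl : Nat.gcd l n = 1)
    (j : ℕ) (hj : j ≤ n - 1) (m : ℂ)
    (hs : ∀ p : ℕ, p < n → Complex.sin (π * l * p / n + m) ≠ 0)
    (hsn : Complex.sin (m * n) ≠ 0) :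
    ∑ p ∈ Finset.range n,
        (Complex.sin (π * l * p / n + m))⁻¹ *
          (-Complex.cos ((2 * j + 1) * (π * l * p / n + m))) =
      -(n * (Complex.cos (m * n) / Complex.sin (m * n))) := by
  rcases Nat.eq_zero_or_pos n with rfl | hn
  · simp
  have ha : IsPrimitiveRoot (exp (2 * I * (π * l / n))) n := by
    convert isPrimitiveRoot_exp_of_coprime l n hn.ne' hl using 2; ring
  have hθ (p : ℕ) : π * l * p / n + m = m + p * (π * l / n) := by ring
  have hterm (p : ℕ) (hp : p ∈ Finset.range n) :
      (Complex.sin (π * l * p / n + m))⁻¹ *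
          (-Complex.cos ((2 * j + 1) * (π * l * p / n + m))) =
        -cot (π * l * p / n + m) +
          2 * ∑ k ∈ Finset.range j, Complex.sin (2 * ↑(k + 1) * (π * l * p / n + m)) := by
    rw [cos_two_mul_add_one_mul, Complex.cot_eq_cos_div_sin]
    field_simp [hs p (Finset.mem_range.1 hp)]
    ring
  have hndvd (k : ℕ) (hk : k ∈ Finset.range j) : ¬ n ∣ k + 1 :=
    Nat.not_dvd_of_pos_of_lt k.succ_pos (by have := Finset.mem_range.1 hk; omega)
  rw [Finset.sum_congr rfl hterm, Finset.sum_add_distrib, Finset.sum_neg_distrib,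
    ← Finset.mul_sum, Finset.sum_comm]
  simp_rw [hθ, sum_cot_add_nat_mul ha m (by rwa [mul_comm]),
    Finset.sum_congr rfl fun k hk => sum_sin_two_mul_nat_mul_add_nat_mul ha m (hndvd k hk),
    Finset.sum_const_zero, mul_zero, add_zero, Complex.cot_eq_cos_div_sin, mul_comm (n : ℂ) m]

theorem watson_harkins_degenerate_case
    (n : ℕ) (hn : 1 ≤ n) (l : ℕ) (hl : Nat.gcd l n = 1)
    (j : ℕ) (hj : j ≤ n - 1) (m : ℂ)
    (hs : ∀ p : ℕ, p < n → Complex.sin (π * l * p / n + m) ≠ 0)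
    (hsn : Complex.sin (m * n) ≠ 0) :
    ∑ p ∈ Finset.range n,
        (Complex.sin (π * l * p / n + m))⁻¹ *
          (-Complex.cos ((2 * j + 1) * (π * l * p / n + m))) =
      -(n * (Complex.cos (m * n) / Complex.sin (m * n))) :=
  watson_harkins_degenerate_case_general n l hl j hj m hs hsn
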